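/- Comparison principle II: With ℒ, φ, W as in the semi-linear setting and ψ: ℝ → ℝ strictly increasing continuous with ψ(0)=0 and ψ(t) ≤ φ(t) for all t ≥ 0, and V: X → (0,∞) with V ≥ W pointwise: if u ∈ F_φ, v ∈ F_ψ, and U ⊆ X satisfy (a) φ⁻¹(ℒu) + W u ≥ ψ⁻¹(ℒv) + V v on U, (b) u − v attains a minimum on U, (c) u ≥ v on X \ U, and (d) ℒv ≥ 0 and v ≥ 0 on U, then u ≥ v on X. -/

import Mathlib

open Filter Topology
open scoped ENNReal

variable {X : Type*}

/-- The graph energy functional `Q(f) = (1/2) Σ_{x,y} b(x,y)(f(x)-f(y))²`, valued in `[0,∞]`. -/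
noncomputable def graphEnergy (b : X → X → ℝ) (f : X → ℝ) : ℝ≥0∞ :=
  (1 / 2 : ℝ≥0∞) * ∑' p : X × X, ENNReal.ofReal (b p.1 p.2 * (f p.1 - f p.2) ^ 2)

/-- The bilinear graph energy form `Q(f,g)`. -/
noncomputable def energyBil (b : X → X → ℝ) (f g : X → ℝ) : ℝ :=
  (1 / 2 : ℝ) * ∑' p : X × X, b p.1 p.2 * (f p.1 - f p.2) * (g p.1 - g p.2)

/-- The formal graph Laplacian `ℒ f(x) = (1/m(x)) Σ_y b(x,y)(f(x)-f(y))`. -/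
noncomputable def formalLap (b : X → X → ℝ) (m : X → ℝ) (f : X → ℝ) (x : X) : ℝ :=
  (∑' y, b x y * (f x - f y)) / m x

/-- Membership in `D₀`: approximability by finitely supported functions pointwise and in energy. -/
def MemD0 (b : X → X → ℝ) (u : X → ℝ) : Prop :=
  ∃ g : ℕ → X → ℝ, (∀ n, (Function.support (g n)).Finite) ∧
    (∀ x, Tendsto (fun n => g n x) atTop (𝓝 (u x))) ∧
    Tendsto (fun n => graphEnergy b (u - g n)) atTop (𝓝 0)

/-- `Φ(s) = ∫₀^s 2φ(t) dt`. -/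
noncomputable def PhiFn (φ : ℝ → ℝ) (s : ℝ) : ℝ := ∫ t in (0:ℝ)..s, 2 * φ t

/-- `κ_f(u) = Σ_x Φ(f(x) - W(x)u(x)) m(x)/W(x)`. -/
noncomputable def kappa (φ : ℝ → ℝ) (W m : X → ℝ) (f u : X → ℝ) : ℝ≥0∞ :=
  ∑' x, ENNReal.ofReal (PhiFn φ (f x - W x * u x) * (m x / W x))

/-- The functional `E_f(u) = Q₀(u) + κ_f(u)`. -/
noncomputable def Efun (b : X → X → ℝ) (m : X → ℝ) (φ : ℝ → ℝ) (W : X → ℝ)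
    (f u : X → ℝ) : ℝ≥0∞ :=
  graphEnergy b u + kappa φ W m f u

/-- The domain of `E_f`: functions in `D₀` with `κ_f(u) < ∞`. -/
def EDom (b : X → X → ℝ) (m : X → ℝ) (φ : ℝ → ℝ) (W : X → ℝ) (f u : X → ℝ) : Prop :=
  MemD0 b u ∧ kappa φ W m f u ≠ ⊤

/-- `u` is a minimizer of `E_f` over its domain. -/
def Minimizes (b : X → X → ℝ) (m : X → ℝ) (φ : ℝ → ℝ) (W : X → ℝ) (f u : X → ℝ) : Prop :=
  EDom b m φ W f u ∧ ∀ v, EDom b m φ W f v → Efun b m φ W f u ≤ Efun b m φ W f v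

/-- The extended Dirichlet resolvent `Rh(x) = sup {Rg(x) : g ∈ C_c(X), 0 ≤ g ≤ h}`,
where for finitely supported `g` the resolvent `Rg` is the minimizer of `E_g`. -/
noncomputable def extRes (b : X → X → ℝ) (m : X → ℝ) (φ : ℝ → ℝ) (W : X → ℝ)
    (h : X → ℝ) (x : X) : ℝ≥0∞ :=
  ⨆ (g : X → ℝ) (_ : (Function.support g).Finite ∧ 0 ≤ g ∧ g ≤ h)
    (u : X → ℝ) (_ : Minimizes b m φ W g u), ENNReal.ofReal (u x)

/-- `g` is a nonnegative supersolution of `φ⁻¹(ℒg) + Wg ≥ h` in `F_φ`. -/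
def Supersol (b : X → X → ℝ) (m : X → ℝ) (φ : ℝ → ℝ) (W : X → ℝ) (h g : X → ℝ) : Prop :=
  0 ≤ g ∧ (∀ x, Summable fun y => b x y * |g y|) ∧
    (∀ x, formalLap b m g x ∈ Set.range φ) ∧
    ∀ x, h x ≤ Function.invFun φ (formalLap b m g x) + W x * g x

/-! At a minimum point `x₀` of `u - v` with `u x₀ < v x₀`, the point is a global minimum of
`u - v`, so `ℒu(x₀) ≤ ℒv(x₀)`. Since `ℒv(x₀) ≥ 0` and `ψ ≤ φ` on `[0, ∞)`, this gives
`φ⁻¹(ℒu(x₀)) ≤ ψ⁻¹(ℒv(x₀))`, and then (a) together with `W ≤ V` and `v(x₀) ≥ 0` forces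
`W(x₀) v(x₀) ≤ W(x₀) u(x₀)`, a contradiction. So the minimum of `u - v` on `U` is
nonnegative, and (c) covers `X \ U`. -/

open Function

lemma summable_mul_const_sub {b f : X → ℝ} (hb : ∀ y, 0 ≤ b y) (hdeg : Summable b)
    (hf : Summable fun y => b y * |f y|) (c : ℝ) : Summable fun y => b y * (c - f y) := by
  have hbf : Summable fun y => b y * f y :=
    .of_abs (hf.congr fun y => by rw [abs_mul, abs_of_nonneg (hb y)])
  simpa only [mul_sub] using (hdeg.mul_right c).sub hbf

lemma formalLap_le_formalLap_of_forall_sub_le {b : X → X → ℝ} {m : X → ℝ} {u v : X → ℝ}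
    {x : X} (hb : ∀ y, 0 ≤ b x y) (hdeg : Summable (b x))
    (hu : Summable fun y => b x y * |u y|) (hv : Summable fun y => b x y * |v y|)
    (hm : 0 ≤ m x) (hmin : ∀ y, u x - v x ≤ u y - v y) :
    formalLap b m u x ≤ formalLap b m v x := by
  refine div_le_div_of_nonneg_right ?_ hm
  refine Summable.tsum_le_tsum (fun y => ?_) (summable_mul_const_sub hb hdeg hu _)
    (summable_mul_const_sub hb hdeg hv _)
  exact mul_le_mul_of_nonneg_left (by linarith [hmin y]) (hb y)

lemma invFun_le_invFun_of_le {φ ψ : ℝ → ℝ} (hφ : StrictMono φ) (hψ : StrictMono ψ)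
    (hψ0 : ψ 0 = 0) (hψφ : ∀ t, 0 ≤ t → ψ t ≤ φ t) {s t : ℝ} (hs : s ∈ Set.range φ)
    (ht : t ∈ Set.range ψ) (hst : s ≤ t) (ht0 : 0 ≤ t) :
    invFun φ s ≤ invFun ψ t := by
  have hψt : ψ (invFun ψ t) = t := invFun_eq ht
  have hnonneg : 0 ≤ invFun ψ t := hψ.le_iff_le.mp (by rw [hψ0, hψt]; exact ht0)
  refine hφ.le_iff_le.mp ?_
  calc φ (invFun φ s) = s := invFun_eq hs
    _ ≤ t := hst
    _ = ψ (invFun ψ t) := hψt.symm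
    _ ≤ φ (invFun ψ t) := hψφ _ hnonneg

theorem comparison_principle_II_general (b : X → X → ℝ)
    (hnn : ∀ x y, 0 ≤ b x y)
    (hdeg : ∀ x, Summable fun y => b x y) (m : X → ℝ) (hm : ∀ x, 0 < m x)
    (φ : ℝ → ℝ) (hφm : StrictMono φ)
    (ψ : ℝ → ℝ) (hψm : StrictMono ψ) (hψ0 : ψ 0 = 0)
    (hψφ : ∀ t : ℝ, 0 ≤ t → ψ t ≤ φ t)
    (W V : X → ℝ) (hW : ∀ x, 0 < W x) (hVW : ∀ x, W x ≤ V x)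
    (u v : X → ℝ)
    (hu : ∀ x, Summable fun y => b x y * |u y|)
    (hv : ∀ x, Summable fun y => b x y * |v y|)
    (huφ : ∀ x, formalLap b m u x ∈ Set.range φ)
    (hvψ : ∀ x, formalLap b m v x ∈ Set.range ψ)
    (U : Set X)
    (ha : ∀ x ∈ U, Function.invFun ψ (formalLap b m v x) + V x * v x ≤
      Function.invFun φ (formalLap b m u x) + W x * u x)
    (hb : ∃ x₀ ∈ U, ∀ y ∈ U, u x₀ - v x₀ ≤ u y - v y)
    (hc : ∀ x ∉ U, v x ≤ u x)
    (hd : ∀ x ∈ U, 0 ≤ formalLap b m v x ∧ 0 ≤ v x) :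
    ∀ x, v x ≤ u x := by
  obtain ⟨x₀, hx₀, hmin⟩ := hb
  obtain ⟨hLv₀, hv₀⟩ := hd x₀ hx₀
  have hx₀_le : v x₀ ≤ u x₀ := by
    by_contra! hlt
    have hglobal : ∀ y, u x₀ - v x₀ ≤ u y - v y := fun y => by
      by_cases hy : y ∈ U
      · exact hmin y hy
      · linarith [hc y hy]
    have hLap := formalLap_le_formalLap_of_forall_sub_le (hnn x₀) (hdeg x₀) (hu x₀) (hv x₀)
      (hm x₀).le hglobal
    have hinv := invFun_le_invFun_of_le hφm hψm hψ0 hψφ (huφ x₀) (hvψ x₀) hLap hLv₀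
    nlinarith [ha x₀ hx₀, mul_nonneg (sub_nonneg.2 (hVW x₀)) hv₀,
      mul_pos (hW x₀) (sub_pos.2 hlt)]
  intro x
  by_cases hx : x ∈ U
  · linarith [hmin x hx]
  · exact hc x hx

theorem comparison_principle_II [Countable X] (b : X → X → ℝ)
    (hsym : ∀ x y, b x y = b y x) (hnn : ∀ x y, 0 ≤ b x y) (hdiag : ∀ x, b x x = 0)
    (hdeg : ∀ x, Summable fun y => b x y) (m : X → ℝ) (hm : ∀ x, 0 < m x)
    (φ : ℝ → ℝ) (hφm : StrictMono φ) (hφc : Continuous φ) (hφ0 : φ 0 = 0)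
    (ψ : ℝ → ℝ) (hψm : StrictMono ψ) (hψc : Continuous ψ) (hψ0 : ψ 0 = 0)
    (hψφ : ∀ t : ℝ, 0 ≤ t → ψ t ≤ φ t)
    (W V : X → ℝ) (hW : ∀ x, 0 < W x) (hV : ∀ x, 0 < V x) (hVW : ∀ x, W x ≤ V x)
    (u v : X → ℝ)
    (hu : ∀ x, Summable fun y => b x y * |u y|)
    (hv : ∀ x, Summable fun y => b x y * |v y|)
    (huφ : ∀ x, formalLap b m u x ∈ Set.range φ)
    (hvψ : ∀ x, formalLap b m v x ∈ Set.range ψ)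
    (U : Set X)
    (ha : ∀ x ∈ U, Function.invFun ψ (formalLap b m v x) + V x * v x ≤
      Function.invFun φ (formalLap b m u x) + W x * u x)
    (hb : ∃ x₀ ∈ U, ∀ y ∈ U, u x₀ - v x₀ ≤ u y - v y)
    (hc : ∀ x ∉ U, v x ≤ u x)
    (hd : ∀ x ∈ U, 0 ≤ formalLap b m v x ∧ 0 ≤ v x) :
    ∀ x, v x ≤ u x :=
  comparison_principle_II_general b hnn hdeg m hm φ hφm ψ hψm hψ0 hψφ W V hW hVW u v hu hv huφ hvψ U
    ha hb hc hd
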